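/- Let 0 ≤ γ < 1 and let Φ, Ψ be Young functions with Ψ^{−1}(t) = t^{−γ} Φ^{−1}(t) for all t > 0, and assume M_γ maps L^Φ(ℝ^n) boundedly into L^Ψ(ℝ^n) (which holds under this relation when 0 < γ < 1). Then there exist dimensional constants c_n, d_n with c_n d_n ≥ 1 and a constant c such that for every cube Q = Q(x,l) and every locally integrable f: ‖M_γ f‖_{L^Ψ_Q} ≤ c (1/Ψ^{−1}(1/|Q|)) sup_{t ≥ c_n d_n l} Ψ^{−1}(1/|Q(x,t)|) ‖f‖_{L^Φ_{Q(x,t)}}. -/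

import Mathlib

open MeasureTheory Set Real ENNReal Filter

noncomputable section

/-- The axis-parallel closed cube in `ℝⁿ` centered at `c` with side length `l`. -/
def cube (n : ℕ) (c : Fin n → ℝ) (l : ℝ) : Set (Fin n → ℝ) :=
  {y | ∀ i, |y i - c i| ≤ l / 2}

/-- The `ℝ≥0∞`-valued fractional maximal function `M_{γ,r} f`:
`sup_{Q ∋ x} |Q|^γ ((1/|Q|) ∫_Q |f|^r)^{1/r}`. -/
def fracMax (n : ℕ) (γ r : ℝ) (f : (Fin n → ℝ) → ℝ) (x : Fin n → ℝ) : ℝ≥0∞ :=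
  ⨆ (c : Fin n → ℝ) (l : ℝ) (_ : 0 < l) (_ : x ∈ cube n c l),
    volume (cube n c l) ^ γ *
      ((volume (cube n c l))⁻¹ * ∫⁻ y in cube n c l, ENNReal.ofReal |f y| ^ r) ^ (1 / r)

/-- The local sharp maximal function `M^♯_{0,s,Q₀} f (x)`, the supremum over
cubes `Q` with `x ∈ Q ⊆ Q₀` of `inf_c inf {α ≥ 0 : |{y ∈ Q : |f(y) - c| > α}| < s|Q|}`. -/
def localSharp (n : ℕ) (s : ℝ) (Q₀ : Set (Fin n → ℝ)) (f : (Fin n → ℝ) → ℝ)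
    (x : Fin n → ℝ) : ℝ≥0∞ :=
  ⨆ (c : Fin n → ℝ) (l : ℝ) (_ : 0 < l) (_ : x ∈ cube n c l) (_ : cube n c l ⊆ Q₀),
    ⨅ (a : ℝ), sInf {α : ℝ≥0∞ |
      volume {y ∈ cube n c l | α < ENNReal.ofReal |f y - a|} <
        ENNReal.ofReal s * volume (cube n c l)}

/-- `T` is of weak type `(r, q)`: `|{|Tf| > λ}| ≤ (C λ⁻¹ ‖f‖_{L^r})^q`. -/
def WeakType (n : ℕ) (T : ((Fin n → ℝ) → ℝ) → (Fin n → ℝ) → ℝ) (r q : ℝ) : Prop :=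
  ∃ C : ℝ, 0 < C ∧ ∀ (f : (Fin n → ℝ) → ℝ) (lam : ℝ), 0 < lam →
    volume {x | lam < |T f x|} ≤
      (ENNReal.ofReal (C / lam) * (∫⁻ y, ENNReal.ofReal |f y| ^ r) ^ (1 / r)) ^ q

/-- `cn` is a dimensional constant for which `|x-x'|/|x-y| ≤ cn 2^{-m}`
whenever `x, x' ∈ Q` and `y ∉ 2^m Q`. -/
def DimConst (n : ℕ) (cn : ℝ) : Prop :=
  0 < cn ∧ ∀ (c : Fin n → ℝ) (l : ℝ), 0 < l → ∀ m : ℕ, 1 ≤ m →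
    ∀ x x' y, x ∈ cube n c l → x' ∈ cube n c l → y ∉ cube n c (2 ^ m * l) →
      ‖x - x'‖ ≤ cn * 2 ^ (-(m : ℝ)) * ‖x - y‖

/-- Dini-type smoothness condition for the kernel `k` of a fractional type operator
of order `γ`, with modulus `ω`. -/
def DiniKernel (n : ℕ) (γ : ℝ) (k : (Fin n → ℝ) → (Fin n → ℝ) → ℝ)
    (ω : ℝ → ℝ) (cn : ℝ) : Prop :=
  (∀ ⦃s t : ℝ⦄, 0 < s → s ≤ t → ω s ≤ ω t) ∧ (∀ t, 0 < t → 0 ≤ ω t) ∧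
  IntegrableOn (fun t => ω (cn * t) / t) (Set.Ioo (0 : ℝ) 1) ∧
  ∃ C > 0, ∀ (c : Fin n → ℝ) (l : ℝ), 0 < l →
    ∀ x x' y, x ∈ cube n c l → x' ∈ cube n c l → y ∉ cube n c (2 * l) →
      |k x y - k x' y| ≤
        C * ‖x - y‖ ^ (-((n : ℝ) * (1 - γ))) * ω (‖x - x'‖ / ‖x - y‖)

/-- The (maximal) median of `g` over the cube `Q(c,l)` with parameter `t`. -/
def medianOn (n : ℕ) (g : (Fin n → ℝ) → ℝ) (t : ℝ) (c : Fin n → ℝ) (l : ℝ) : ℝ :=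
  sSup {M : ℝ | volume {y ∈ cube n c l | g y < M} ≤ ENNReal.ofReal t * volume (cube n c l)}

/-- `m♯_f(1-s, Q) = inf_a m_{|f-a|}(1-s, Q)`. -/
def sharpMedianOn (n : ℕ) (f : (Fin n → ℝ) → ℝ) (s : ℝ) (c : Fin n → ℝ) (l : ℝ) : ℝ :=
  ⨅ a : ℝ, medianOn n (fun y => |f y - a|) (1 - s) c l

/-- `Φ` satisfies condition `C`. -/
def CondC (Φ : ℝ → ℝ) : Prop :=
  Continuous Φ ∧ MonotoneOn Φ (Set.Ici 0) ∧ Φ 0 = 0 ∧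
    ∃ c > 0, ∀ t > 0, Φ (2 * t) ≤ c * Φ t

/-- A weight: nonnegative and locally integrable. -/
def IsWeight (n : ℕ) (w : (Fin n → ℝ) → ℝ) : Prop :=
  (∀ x, 0 ≤ w x) ∧ LocallyIntegrable w volume

/-- The pair of weights `(w, v)` satisfies condition `F`. -/
def CondF (n : ℕ) (w v : (Fin n → ℝ) → ℝ) : Prop :=
  ∃ c > 0, ∃ β > 0, ∃ α : ℝ, 0 < α ∧ α < 1 ∧
    ∀ (cc : Fin n → ℝ) (l : ℝ), 0 < l → ∀ E : Set (Fin n → ℝ),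
      MeasurableSet E → E ⊆ cube n cc l →
      volume E ≤ ENNReal.ofReal α * volume (cube n cc l) →
      ∫ x in E, w x ≤
        c * ((volume E).toReal / (volume (cube n cc l)).toReal) ^ β *
          ∫ x in cube n cc l \ E, v x

/-- A bounded, compactly supported, measurable function. -/
def NiceFun (n : ℕ) (f : (Fin n → ℝ) → ℝ) : Prop :=
  Measurable f ∧ HasCompactSupport f ∧ ∃ M : ℝ, ∀ x, |f x| ≤ M

/-- `m_g(t, Q₀) → 0` as the cubes `Q₀` increase to `ℝⁿ`. -/
def MedianTendstoZero (n : ℕ) (g : (Fin n → ℝ) → ℝ) (t : ℝ) : Prop :=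
  ∀ ε > 0, ∃ R > 0, ∀ (c : Fin n → ℝ) (l : ℝ), 0 < l →
    cube n (fun _ => 0) R ⊆ cube n c l → |medianOn n g t c l| < ε

/-- A Young function. -/
def IsYoung (Φ : ℝ → ℝ) : Prop :=
  ConvexOn ℝ (Set.Ici 0) Φ ∧ Continuous Φ ∧ MonotoneOn Φ (Set.Ici 0) ∧ Φ 0 = 0 ∧
  (∃ c > 0, ∀ t > 0, Φ (2 * t) ≤ c * Φ t) ∧
  Tendsto (fun t => Φ t / t) atTop atTop

/-- Generalized inverse of a Young function. -/
def youngInv (Φ : ℝ → ℝ) (t : ℝ) : ℝ :=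
  sInf {s : ℝ | 0 ≤ s ∧ t ≤ Φ s}

/-- The conjugate Young function `Ā(s) = sup_{t>0} (st - A(t))`. -/
def conjYoung (A : ℝ → ℝ) (s : ℝ) : ℝ :=
  sSup {v : ℝ | ∃ t > 0, v = s * t - A t}

/-- Unnormalized Luxemburg norm `‖f‖_{L^Φ_Q}`. -/
def luxNorm (n : ℕ) (Φ : ℝ → ℝ) (Q : Set (Fin n → ℝ)) (f : (Fin n → ℝ) → ℝ) : ℝ≥0∞ :=
  sInf {lam : ℝ≥0∞ | 0 < lam ∧
    ∫⁻ y in Q, ENNReal.ofReal (Φ (|f y| / lam.toReal)) ≤ 1}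

/-- Normalized Luxemburg average `‖f‖_{L^A(Q)}` (i.e. `(1/|Q|)∫_Q A(|f|/λ) ≤ 1`). -/
def luxAvg (n : ℕ) (A : ℝ → ℝ) (Q : Set (Fin n → ℝ)) (f : (Fin n → ℝ) → ℝ) : ℝ≥0∞ :=
  sInf {lam : ℝ≥0∞ | 0 < lam ∧
    ∫⁻ y in Q, ENNReal.ofReal (A (|f y| / lam.toReal)) ≤ volume Q}

/-- Luxemburg norm on all of `ℝⁿ`. -/
def luxNormGlobal (n : ℕ) (Φ : ℝ → ℝ) (f : (Fin n → ℝ) → ℝ) : ℝ≥0∞ :=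
  sInf {lam : ℝ≥0∞ | 0 < lam ∧
    ∫⁻ y, ENNReal.ofReal (Φ (|f y| / lam.toReal)) ≤ 1}

/-- Orlicz fractional maximal function `M_{γ,A} f(x) = sup_{Q ∋ x} |Q|^γ ‖f‖_{L^A(Q)}`. -/
def orliczMax (n : ℕ) (γ : ℝ) (A : ℝ → ℝ) (f : (Fin n → ℝ) → ℝ) (x : Fin n → ℝ) : ℝ≥0∞ :=
  ⨆ (c : Fin n → ℝ) (l : ℝ) (_ : 0 < l) (_ : x ∈ cube n c l),
    volume (cube n c l) ^ γ * luxAvg n A (cube n c l) f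

/-- Generalized Orlicz–Morrey norm `‖f‖_{𝓜^{Φ,φ}}`. -/
def morreyNorm (n : ℕ) (Φ : ℝ → ℝ) (φ : (Fin n → ℝ) → ℝ → ℝ) (f : (Fin n → ℝ) → ℝ) : ℝ≥0∞ :=
  ⨆ (x : Fin n → ℝ) (l : ℝ) (_ : 0 < l),
    ENNReal.ofReal ((1 / φ x l) * youngInv Φ (1 / (volume (cube n x l)).toReal)) *
      luxNorm n Φ (cube n x l) f

/-- Generalized Orlicz–Campanato seminorm `‖f‖_{𝓛^{Φ,φ}}`. -/
def campNorm (n : ℕ) (Φ : ℝ → ℝ) (φ : (Fin n → ℝ) → ℝ → ℝ) (f : (Fin n → ℝ) → ℝ) : ℝ≥0∞ :=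
  ⨆ (x : Fin n → ℝ) (l : ℝ) (_ : 0 < l),
    ENNReal.ofReal ((1 / φ x l) * youngInv Φ (1 / (volume (cube n x l)).toReal)) *
      ⨅ a : ℝ, luxNorm n Φ (cube n x l) (fun y => f y - a)

/-- The class `B_p` of Young functions. -/
def Bp (p : ℝ) (A : ℝ → ℝ) : Prop :=
  ∃ c > 0, IntegrableOn (fun t => A t / t ^ p / t) (Set.Ioi c)

/-- The class `B_{α,p}` of Cruz-Uribe and Moen (with `B_{0,p} = B_p`). -/
def Balphap (α p : ℝ) (A : ℝ → ℝ) : Prop :=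
  if α = 0 then Bp p A
  else ∃ c > 0,
    IntegrableOn (fun t => A t ^ ((1 / p - α)⁻¹ / p) / t ^ (1 / p - α)⁻¹ / t) (Set.Ioi c)

/-- The Riesz-potential-type integral `∫ |f(y)| |x-y|^{-n(1-γ)} dy`, valued in `ℝ≥0∞`. -/
def rieszPotential (n : ℕ) (γ : ℝ) (f : (Fin n → ℝ) → ℝ) (x : Fin n → ℝ) : ℝ≥0∞ :=
  ∫⁻ y, ENNReal.ofReal |f y| * ENNReal.ofReal (‖x - y‖ ^ (-((n : ℝ) * (1 - γ))))

end

/-!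
Fix `Q = Q(x,l)` and `z ∈ Q`, and put `f₁ = f 1_{3Q}`. A cube through `z` of side `s ≤ l` lies
in `3Q`, so it only sees `f₁`. A cube `Q'` through `z` of side `s > l` lies in `Q(x,t)` with
`t = 2s + l ∈ [3l, 3s]`; Jensen's inequality `⨍_{Q(x,t)} |f| ≤ Φ⁻¹(1/|Q(x,t)|) ‖f‖_{L^Φ_{Q(x,t)}}`
and `Φ⁻¹(u) = u^γ Ψ⁻¹(u)` turn its fractional average into at most
`3^{n(1-γ)} Ψ⁻¹(1/|Q(x,t)|) ‖f‖_{L^Φ_{Q(x,t)}}`. Hence `M_γ f ≤ M_γ f₁ + b` on `Q` for a constant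
`b` bounded by the supremum in the statement (with `c_n d_n = 3`).

In `L^Ψ_Q` the constant `b` has norm `b / Ψ⁻¹(1/|Q|)`, and the boundedness of `M_γ` gives
`‖M_γ f₁‖_{L^Ψ_Q} ≤ C ‖f‖_{L^Φ_{3Q}}`; the latter is the `t = 3l` term of the supremum divided by
`Ψ⁻¹(1/|3Q|) ≥ 3^{-n} Ψ⁻¹(1/|Q|)`.
-/

noncomputable def orliczTail (n : ℕ) (Φ Ψ : ℝ → ℝ) (f : (Fin n → ℝ) → ℝ) (x : Fin n → ℝ)
    (r : ℝ) : ℝ≥0∞ :=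
  ⨆ (t : ℝ) (_ : r ≤ t),
    ENNReal.ofReal (youngInv Ψ (1 / (volume (cube n x t)).toReal)) * luxNorm n Φ (cube n x t) f

noncomputable def fracAvg (n : ℕ) (γ : ℝ) (f : (Fin n → ℝ) → ℝ) (c : Fin n → ℝ) (s : ℝ) : ℝ≥0∞ :=
  volume (cube n c s) ^ γ * ((volume (cube n c s))⁻¹ * ∫⁻ y in cube n c s, ENNReal.ofReal |f y|)

namespace IsYoung

variable {Φ : ℝ → ℝ} {s t : ℝ}

lemma convexOn (hΦ : IsYoung Φ) : ConvexOn ℝ (Ici 0) Φ := hΦ.1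

lemma continuous (hΦ : IsYoung Φ) : Continuous Φ := hΦ.2.1

lemma monotoneOn (hΦ : IsYoung Φ) : MonotoneOn Φ (Ici 0) := hΦ.2.2.1

lemma map_zero (hΦ : IsYoung Φ) : Φ 0 = 0 := hΦ.2.2.2.1

lemma doubling (hΦ : IsYoung Φ) : ∃ c > 0, ∀ t > 0, Φ (2 * t) ≤ c * Φ t := hΦ.2.2.2.2.1

lemma tendsto_div_atTop (hΦ : IsYoung Φ) : Tendsto (fun t => Φ t / t) atTop atTop :=
  hΦ.2.2.2.2.2

lemma nonneg (hΦ : IsYoung Φ) (ht : 0 ≤ t) : 0 ≤ Φ t :=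
  hΦ.map_zero ▸ hΦ.monotoneOn self_mem_Ici ht ht

lemma apply_le_div_mul (hΦ : IsYoung Φ) (hs : 0 ≤ s) (hst : s ≤ t) (ht : 0 < t) :
    Φ s ≤ s / t * Φ t := by
  have h := hΦ.convexOn.2 self_mem_Ici (mem_Ici.2 ht.le) (sub_nonneg.2 ((div_le_one ht).2 hst))
    (div_nonneg hs ht.le) (sub_add_cancel 1 (s / t))
  simpa [hΦ.map_zero, div_mul_cancel₀ s ht.ne'] using h

lemma pos (hΦ : IsYoung Φ) (ht : 0 < t) : 0 < Φ t := by
  by_contra! h0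
  obtain ⟨c, -, hdbl⟩ := hΦ.doubling
  -- doubling spreads the zero at `t` to all of `[0, ∞)`, against `Φ t / t → ∞`
  have hzero : ∀ k : ℕ, Φ (2 ^ k * t) = 0 := by
    intro k
    induction k with
    | zero => simpa using le_antisymm h0 (hΦ.nonneg ht.le)
    | succ k ih =>
      have h := hdbl (2 ^ k * t) (by positivity)
      rw [ih, mul_zero, ← mul_assoc, ← pow_succ'] at h
      exact le_antisymm h (hΦ.nonneg (by positivity))
  obtain ⟨a, ha⟩ := (hΦ.tendsto_div_atTop.eventually_ge_atTop 1).exists_forall_of_atTop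
  obtain ⟨k, hk⟩ := pow_unbounded_of_one_lt (a / t) one_lt_two
  have h := ha (2 ^ k * t) ((div_lt_iff₀ ht).1 hk).le
  rw [hzero k, zero_div] at h
  exact absurd h (by norm_num)

lemma strictMonoOn (hΦ : IsYoung Φ) : StrictMonoOn Φ (Ici 0) := by
  intro s hs t ht hst
  have ht0 : 0 < t := lt_of_le_of_lt hs hst
  have h := hΦ.apply_le_div_mul hs hst.le ht0
  have hst' : s / t < 1 := (div_lt_one ht0).2 hst
  nlinarith [hΦ.pos ht0]

lemma mul_apply_le {K : ℝ} (hΦ : IsYoung Φ) (hK : 1 ≤ K) (ht : 0 ≤ t) : K * Φ t ≤ Φ (K * t) := by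
  rcases ht.eq_or_lt with rfl | ht0
  · simp [hΦ.map_zero]
  have h := hΦ.apply_le_div_mul ht (le_mul_of_one_le_left ht hK) (by positivity)
  rwa [div_mul_cancel_right₀ ht0.ne', le_inv_mul_iff₀ (by positivity)] at h

lemma exists_le_apply (hΦ : IsYoung Φ) (u : ℝ) : ∃ s, 0 ≤ s ∧ u ≤ Φ s := by
  obtain ⟨t, ht1, ht⟩ :=
    ((eventually_ge_atTop (1 : ℝ)).and (hΦ.tendsto_div_atTop.eventually_ge_atTop |u|)).exists
  have h : |u| * t ≤ Φ t := (le_div_iff₀ (by linarith)).1 ht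
  exact ⟨t, by linarith, by nlinarith [le_abs_self u, abs_nonneg u]⟩

lemma apply_add_div_add_le (hΦ : IsYoung Φ) {u v a b : ℝ} (hu : 0 ≤ u) (hv : 0 ≤ v)
    (ha : 0 < a) (hb : 0 ≤ b) :
    Φ ((u + b * v) / (a + b)) ≤ a / (a + b) * Φ (u / a) + b / (a + b) * Φ v := by
  have h := hΦ.convexOn.2 (mem_Ici.2 (div_nonneg hu ha.le)) (mem_Ici.2 hv)
    (by positivity : 0 ≤ a / (a + b)) (by positivity : 0 ≤ b / (a + b)) (by field_simp)
  have harg : a / (a + b) * (u / a) + b / (a + b) * v = (u + b * v) / (a + b) := by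
    field_simp
  simp only [smul_eq_mul, harg] at h
  exact h

end IsYoung

section YoungInv

variable {Φ : ℝ → ℝ} {u : ℝ}

lemma youngInv_mem (hΦ : IsYoung Φ) (u : ℝ) : youngInv Φ u ∈ {s : ℝ | 0 ≤ s ∧ u ≤ Φ s} :=
  (isClosed_Ici.inter (isClosed_Ici.preimage hΦ.continuous)).csInf_mem (hΦ.exists_le_apply u)
    ⟨0, fun _ hs => hs.1⟩

lemma youngInv_nonneg (hΦ : IsYoung Φ) (u : ℝ) : 0 ≤ youngInv Φ u :=
  (youngInv_mem hΦ u).1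

lemma youngInv_pos (hΦ : IsYoung Φ) (hu : 0 < u) : 0 < youngInv Φ u := by
  refine (youngInv_nonneg hΦ u).lt_of_ne fun h => ?_
  have := (youngInv_mem hΦ u).2
  rw [← h, hΦ.map_zero] at this
  linarith

lemma apply_youngInv (hΦ : IsYoung Φ) (hu : 0 < u) : Φ (youngInv Φ u) = u := by
  obtain ⟨hI0, hIu⟩ := youngInv_mem hΦ u
  obtain ⟨s, ⟨hs0, hsI⟩, hs⟩ := intermediate_value_Icc hI0 hΦ.continuous.continuousOn
    (show u ∈ Icc (Φ 0) (Φ (youngInv Φ u)) from ⟨by rw [hΦ.map_zero]; exact hu.le, hIu⟩)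
  have hIs : youngInv Φ u ≤ s := csInf_le ⟨0, fun _ h => h.1⟩ ⟨hs0, hs.ge⟩
  rwa [← le_antisymm hsI hIs]

lemma le_youngInv (hΦ : IsYoung Φ) {s : ℝ} (hs : 0 ≤ s) (h : Φ s ≤ u) : s ≤ youngInv Φ u := by
  by_contra! hlt
  obtain ⟨hI0, hIu⟩ := youngInv_mem hΦ u
  linarith [hΦ.strictMonoOn hI0 hs hlt]

lemma youngInv_mul_le (hΦ : IsYoung Φ) {K : ℝ} (hK : 1 ≤ K) (hu : 0 < u) :
    youngInv Φ (K * u) ≤ K * youngInv Φ u := by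
  refine csInf_le ⟨0, fun _ h => h.1⟩ ⟨by nlinarith [youngInv_nonneg hΦ u], ?_⟩
  calc K * u = K * Φ (youngInv Φ u) := by rw [apply_youngInv hΦ hu]
    _ ≤ Φ (K * youngInv Φ u) := hΦ.mul_apply_le hK (youngInv_nonneg hΦ u)

end YoungInv

lemma IsYoung.integral_le_of_lintegral_le_one {Φ : ℝ → ℝ} {α : Type*} [MeasurableSpace α]
    {μ : Measure α} [IsFiniteMeasure μ] [NeZero μ] (hΦ : IsYoung Φ) {u : α → ℝ}
    (hu0 : ∀ y, 0 ≤ u y) (hu : Integrable u μ) (hΦu : ∫⁻ y, ENNReal.ofReal (Φ (u y)) ∂μ ≤ 1) :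
    ∫ y, u y ∂μ ≤ μ.real univ * youngInv Φ (1 / μ.real univ) := by
  have hV : 0 < μ.real univ := measureReal_univ_pos
  have hΦu0 : 0 ≤ᵐ[μ] fun y => Φ (u y) := ae_of_all _ fun y => hΦ.nonneg (hu0 y)
  have hΦu_int : Integrable (fun y => Φ (u y)) μ :=
    ⟨hΦ.continuous.comp_aestronglyMeasurable hu.1,
      (hasFiniteIntegral_iff_ofReal hΦu0).2 (hΦu.trans_lt one_lt_top)⟩
  have hjensen : Φ (⨍ y, u y ∂μ) ≤ ⨍ y, Φ (u y) ∂μ :=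
    hΦ.convexOn.map_average_le hΦ.continuous.continuousOn isClosed_Ici (ae_of_all _ hu0) hu hΦu_int
  have hΦavg : ⨍ y, Φ (u y) ∂μ ≤ 1 / μ.real univ := by
    rw [average_eq, smul_eq_mul, integral_eq_lintegral_of_nonneg_ae hΦu0 hΦu_int.1,
      ← div_eq_inv_mul]
    gcongr
    exact toReal_le_of_le_ofReal zero_le_one (by simpa using hΦu)
  have havg0 : 0 ≤ ⨍ y, u y ∂μ := by
    rw [average_eq, smul_eq_mul]
    exact mul_nonneg (by positivity) (integral_nonneg hu0)
  have havg := le_youngInv hΦ havg0 (hjensen.trans hΦavg)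
  rwa [average_eq, smul_eq_mul, inv_mul_le_iff₀ hV] at havg

lemma toReal_le_toReal_add_of_le_sup {a a₁ b : ℝ≥0∞} (ha₁ : a₁ ≤ a) (hb : b ≠ ⊤)
    (h : a ≤ a₁ ⊔ b) : a.toReal ≤ a₁.toReal + b.toReal := by
  rcases eq_or_ne a ⊤ with rfl | ha
  · simp only [toReal_top]
    positivity
  have ha₁' := ne_top_of_le_ne_top ha ha₁
  calc a.toReal ≤ (a₁ + b).toReal :=
        toReal_mono (add_ne_top.2 ⟨ha₁', hb⟩) (h.trans (sup_le le_self_add le_add_self))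
    _ = a₁.toReal + b.toReal := toReal_add ha₁' hb

lemma rpow_mul_inv_mul_rpow_le {A B K γ : ℝ} (hA : 0 < A) (hB : 0 ≤ B) (hBK : B ≤ K * A)
    (hγ : γ < 1) : A ^ γ * A⁻¹ * B ^ (1 - γ) ≤ K ^ (1 - γ) := by
  have h : A ^ γ * A⁻¹ * B ^ (1 - γ) = (B / A) ^ (1 - γ) := by
    rw [div_rpow hB hA.le, rpow_sub hA, Real.rpow_one]
    field_simp
  rw [h]
  exact rpow_le_rpow (div_nonneg hB hA.le) ((div_le_iff₀ hA).2 hBK) (by linarith)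

section Cube

variable {n : ℕ}

lemma cube_eq_pi (c : Fin n → ℝ) (l : ℝ) :
    cube n c l = Set.pi univ (fun i => Icc (c i - l / 2) (c i + l / 2)) := by
  ext y
  simp only [cube, Set.mem_ofPred_eq, Set.mem_pi, mem_univ, true_implies, mem_Icc, abs_sub_le_iff]
  exact forall_congr' fun i => by constructor <;> intro h <;> constructor <;> linarith [h.1, h.2]

lemma measurableSet_cube (c : Fin n → ℝ) (l : ℝ) : MeasurableSet (cube n c l) := by
  rw [cube_eq_pi]
  exact MeasurableSet.univ_pi fun _ => measurableSet_Icc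

lemma isCompact_cube (c : Fin n → ℝ) (l : ℝ) : IsCompact (cube n c l) := by
  rw [cube_eq_pi]
  exact isCompact_univ_pi fun _ => isCompact_Icc

lemma volume_cube (c : Fin n → ℝ) {l : ℝ} (hl : 0 ≤ l) :
    volume (cube n c l) = ENNReal.ofReal (l ^ n) := by
  simp only [cube_eq_pi, volume_pi_pi, Real.volume_Icc, add_sub_sub_cancel, add_halves,
    Finset.prod_const, Finset.card_univ, Fintype.card_fin, ENNReal.ofReal_pow hl]

lemma toReal_volume_cube (c : Fin n → ℝ) {l : ℝ} (hl : 0 ≤ l) :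
    (volume (cube n c l)).toReal = l ^ n := by
  rw [volume_cube c hl, toReal_ofReal (by positivity)]

lemma volume_cube_ne_zero (c : Fin n → ℝ) {l : ℝ} (hl : 0 < l) : volume (cube n c l) ≠ 0 := by
  rw [volume_cube c hl.le]
  exact (ofReal_pos.2 (by positivity)).ne'

lemma volume_cube_ne_top (c : Fin n → ℝ) (l : ℝ) : volume (cube n c l) ≠ ⊤ :=
  (isCompact_cube c l).measure_lt_top.ne

lemma cube_mono {c : Fin n → ℝ} {l l' : ℝ} (h : l ≤ l') : cube n c l ⊆ cube n c l' :=
  fun _ hy i => (hy i).trans (by linarith)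

lemma cube_subset_cube_of_mem {x c z : Fin n → ℝ} {l s : ℝ} (hzc : z ∈ cube n c s)
    (hzx : z ∈ cube n x l) : cube n c s ⊆ cube n x (2 * s + l) := by
  intro w hw i
  have hcz : |c i - z i| ≤ s / 2 := by rw [abs_sub_comm]; exact hzc i
  calc |w i - x i| ≤ |w i - c i| + (|c i - z i| + |z i - x i|) :=
        (abs_sub_le _ _ _).trans (by gcongr; exact abs_sub_le _ _ _)
    _ ≤ (2 * s + l) / 2 := by linarith [hw i, hzx i]

end Cube

section Luxemburg

variable {n : ℕ} {Φ : ℝ → ℝ} {Q : Set (Fin n → ℝ)}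

lemma lintegral_le_mul_luxNorm (hΦ : IsYoung Φ) (hQ0 : volume Q ≠ 0) (hQ : volume Q ≠ ⊤)
    {f : (Fin n → ℝ) → ℝ} (hf : IntegrableOn f Q) :
    ∫⁻ y in Q, ENNReal.ofReal |f y| ≤
      ENNReal.ofReal ((volume Q).toReal * youngInv Φ (1 / (volume Q).toReal)) *
        luxNorm n Φ Q f := by
  have hV : 0 < (volume Q).toReal := toReal_pos hQ0 hQ
  have hc : ENNReal.ofReal ((volume Q).toReal * youngInv Φ (1 / (volume Q).toReal)) ≠ 0 :=
    (ofReal_pos.2 (mul_pos hV (youngInv_pos hΦ (by positivity)))).ne'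
  rw [mul_comm, ← ENNReal.div_le_iff hc ofReal_ne_top]
  refine le_sInf fun lam ⟨hlam0, hlam⟩ => ?_
  rcases eq_or_ne lam ⊤ with rfl | hlam_top
  · exact le_top
  have : IsFiniteMeasure (volume.restrict Q) := isFiniteMeasure_restrict.2 hQ
  have : NeZero (volume.restrict Q) := ⟨by rwa [Ne, Measure.restrict_eq_zero]⟩
  have hJ := hΦ.integral_le_of_lintegral_le_one (μ := volume.restrict Q)
    (u := fun y => |f y| / lam.toReal) (fun y => by positivity) (hf.abs.div_const _) hlam
  rw [measureReal_restrict_apply_univ, measureReal_def, integral_div,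
    div_le_iff₀ (toReal_pos hlam0.ne' hlam_top)] at hJ
  rw [ENNReal.div_le_iff hc ofReal_ne_top, ← ofReal_integral_eq_lintegral_ofReal hf.abs
    (ae_of_all _ fun _ => abs_nonneg _), ← ofReal_toReal hlam_top, ← ofReal_mul toReal_nonneg]
  exact ofReal_le_ofReal (hJ.trans_eq (mul_comm _ _))

lemma lintegral_le_rpow_mul_luxNorm {Ψ : ℝ → ℝ} {γ : ℝ} (hΦ : IsYoung Φ)
    (hinv : ∀ t : ℝ, 0 < t → youngInv Ψ t = t ^ (-γ) * youngInv Φ t)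
    (hQ0 : volume Q ≠ 0) (hQ : volume Q ≠ ⊤) {f : (Fin n → ℝ) → ℝ} (hf : IntegrableOn f Q) :
    ∫⁻ y in Q, ENNReal.ofReal |f y| ≤
      ENNReal.ofReal ((volume Q).toReal ^ (1 - γ) * youngInv Ψ (1 / (volume Q).toReal)) *
        luxNorm n Φ Q f := by
  have hV : 0 < (volume Q).toReal := toReal_pos hQ0 hQ
  rw [hinv _ (by positivity), one_div, inv_rpow hV.le, rpow_neg hV.le, inv_inv, ← mul_assoc,
    ← rpow_add hV, sub_add_cancel, Real.rpow_one, ← one_div]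
  exact lintegral_le_mul_luxNorm hΦ hQ0 hQ hf

lemma luxNorm_le_luxNormGlobal (f : (Fin n → ℝ) → ℝ) : luxNorm n Φ Q f ≤ luxNormGlobal n Φ f :=
  sInf_le_sInf fun _ ⟨h0, h1⟩ => ⟨h0, (setLIntegral_le_lintegral _ _).trans h1⟩

lemma luxNormGlobal_indicator_le (hΦ0 : Φ 0 = 0) (hQ : MeasurableSet Q) (f : (Fin n → ℝ) → ℝ) :
    luxNormGlobal n Φ (Q.indicator f) ≤ luxNorm n Φ Q f := by
  refine sInf_le_sInf fun lam ⟨h0, h1⟩ => ⟨h0, ?_⟩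
  have h : (fun y => ENNReal.ofReal (Φ (|Q.indicator f y| / lam.toReal))) =
      Q.indicator fun y => ENNReal.ofReal (Φ (|f y| / lam.toReal)) := by
    funext y
    by_cases hy : y ∈ Q <;> simp [hy, hΦ0]
  rwa [h, lintegral_indicator hQ]

lemma setLIntegral_le_one_of_le_add_const {Ψ : ℝ → ℝ} (hΨ : IsYoung Ψ) (hQm : MeasurableSet Q)
    (hQ0 : volume Q ≠ 0) (hQ : volume Q ≠ ⊤) {g g₁ : (Fin n → ℝ) → ℝ} {a μ : ℝ} (ha : 0 < a)
    (hμ : 0 ≤ μ) (hg : ∀ z ∈ Q, |g z| ≤ |g₁ z| + μ * youngInv Ψ (1 / (volume Q).toReal))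
    (hg₁ : ∫⁻ z in Q, ENNReal.ofReal (Ψ (|g₁ z| / a)) ≤ 1) :
    ∫⁻ z in Q, ENNReal.ofReal (Ψ (|g z| / (a + μ))) ≤ 1 := by
  have hV : 0 < (volume Q).toReal := toReal_pos hQ0 hQ
  have hvol : ENNReal.ofReal (1 / (volume Q).toReal) * volume Q = 1 := by
    rw [one_div, ofReal_inv_of_pos hV, ofReal_toReal hQ, ENNReal.inv_mul_cancel hQ0 hQ]
  have hpt : ∀ z ∈ Q, ENNReal.ofReal (Ψ (|g z| / (a + μ))) ≤
      ENNReal.ofReal (a / (a + μ)) * ENNReal.ofReal (Ψ (|g₁ z| / a)) +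
        ENNReal.ofReal (μ / (a + μ) * (1 / (volume Q).toReal)) := by
    intro z hz
    rw [← ofReal_mul (by positivity),
      ← ofReal_add (mul_nonneg (by positivity) (hΨ.nonneg (by positivity))) (by positivity),
      ← apply_youngInv hΨ (one_div_pos.2 hV)]
    refine ofReal_le_ofReal (le_trans ?_ (hΨ.apply_add_div_add_le (abs_nonneg _)
      (youngInv_nonneg hΨ _) ha hμ))
    exact hΨ.monotoneOn (mem_Ici.2 (by positivity))
      (mem_Ici.2 (div_nonneg ((abs_nonneg _).trans (hg z hz)) (by positivity)))
      (div_le_div_of_nonneg_right (hg z hz) (by positivity))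
  calc ∫⁻ z in Q, ENNReal.ofReal (Ψ (|g z| / (a + μ)))
      ≤ ∫⁻ z in Q, (ENNReal.ofReal (a / (a + μ)) * ENNReal.ofReal (Ψ (|g₁ z| / a)) +
          ENNReal.ofReal (μ / (a + μ) * (1 / (volume Q).toReal))) :=
        setLIntegral_mono' hQm hpt
    _ = ENNReal.ofReal (a / (a + μ)) * (∫⁻ z in Q, ENNReal.ofReal (Ψ (|g₁ z| / a))) +
          ENNReal.ofReal (μ / (a + μ)) := by
      rw [lintegral_add_right _ measurable_const, lintegral_const_mul' _ _ ofReal_ne_top,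
        setLIntegral_const, ofReal_mul (by positivity), mul_assoc, hvol, mul_one]
    _ ≤ ENNReal.ofReal (a / (a + μ)) * 1 + ENNReal.ofReal (μ / (a + μ)) := by gcongr
    _ = 1 := by
      rw [mul_one, ← ofReal_add (by positivity) (by positivity), ← add_div,
        div_self (by positivity), ofReal_one]

/-- `μ Ψ⁻¹(1/|Q|)` is the constant of norm `μ` in `L^Ψ_Q`. -/
lemma luxNorm_le_add_const {Ψ : ℝ → ℝ} (hΨ : IsYoung Ψ) (hQm : MeasurableSet Q)
    (hQ0 : volume Q ≠ 0) (hQ : volume Q ≠ ⊤) {g g₁ : (Fin n → ℝ) → ℝ} {μ : ℝ} (hμ : 0 ≤ μ)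
    (hg : ∀ z ∈ Q, |g z| ≤ |g₁ z| + μ * youngInv Ψ (1 / (volume Q).toReal)) :
    luxNorm n Ψ Q g ≤ luxNorm n Ψ Q g₁ + ENNReal.ofReal μ := by
  rw [luxNorm, luxNorm, sInf_add]
  refine le_iInf₂ fun lam ⟨hlam0, hlam⟩ => sInf_le ⟨hlam0.trans_le le_self_add, ?_⟩
  rcases eq_or_ne lam ⊤ with rfl | hlam_top
  · simp [hΨ.map_zero]
  rw [toReal_add hlam_top ofReal_ne_top, toReal_ofReal hμ]
  exact setLIntegral_le_one_of_le_add_const hΨ hQm hQ0 hQ (toReal_pos hlam0.ne' hlam_top) hμ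
    hg hlam

end Luxemburg

section OrliczTail

variable {n : ℕ} {Φ Ψ : ℝ → ℝ} {f : (Fin n → ℝ) → ℝ} {x : Fin n → ℝ}

lemma le_orliczTail {r t : ℝ} (h : r ≤ t) :
    ENNReal.ofReal (youngInv Ψ (1 / (volume (cube n x t)).toReal)) * luxNorm n Φ (cube n x t) f ≤
      orliczTail n Φ Ψ f x r :=
  le_iSup₂ (f := fun t (_ : r ≤ t) =>
    ENNReal.ofReal (youngInv Ψ (1 / (volume (cube n x t)).toReal)) * luxNorm n Φ (cube n x t) f) t h

lemma luxNorm_cube_le_orliczTail (hΨ : IsYoung Ψ) {a l : ℝ} (ha : 1 ≤ a) (hl : 0 < l) :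
    luxNorm n Φ (cube n x (a * l)) f ≤
      ENNReal.ofReal (a ^ n * (1 / youngInv Ψ (1 / (volume (cube n x l)).toReal))) *
        orliczTail n Φ Ψ f x (a * l) := by
  have hal : 0 < a * l := by positivity
  rw [toReal_volume_cube x hl.le]
  have hψ := youngInv_pos hΨ (by positivity : (0 : ℝ) < 1 / (a * l) ^ n)
  have hscale : youngInv Ψ (1 / l ^ n) ≤ a ^ n * youngInv Ψ (1 / (a * l) ^ n) := by
    calc youngInv Ψ (1 / l ^ n) = youngInv Ψ (a ^ n * (1 / (a * l) ^ n)) := by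
          rw [mul_pow]; field_simp
      _ ≤ _ := youngInv_mul_le hΨ (one_le_pow₀ ha) (by positivity)
  calc luxNorm n Φ (cube n x (a * l)) f
      = ENNReal.ofReal (1 / youngInv Ψ (1 / (a * l) ^ n)) *
          (ENNReal.ofReal (youngInv Ψ (1 / (a * l) ^ n)) * luxNorm n Φ (cube n x (a * l)) f) := by
        rw [← mul_assoc, ← ofReal_mul (by positivity), one_div_mul_cancel hψ.ne', ofReal_one,
          one_mul]
    _ ≤ _ := by
      gcongr
      · rw [mul_one_div, div_le_div_iff₀ hψ (youngInv_pos hΨ (by positivity)), one_mul]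
        exact hscale
      · rw [← toReal_volume_cube x hal.le]
        exact le_orliczTail le_rfl

end OrliczTail

section FracMax

variable {n : ℕ} {γ : ℝ} {f f₁ : (Fin n → ℝ) → ℝ} {z : Fin n → ℝ}

lemma fracMax_one_eq_iSup (f : (Fin n → ℝ) → ℝ) (z : Fin n → ℝ) :
    fracMax n γ 1 f z = ⨆ (c : Fin n → ℝ) (s : ℝ) (_ : 0 < s) (_ : z ∈ cube n c s),
      fracAvg n γ f c s := by
  simp only [fracMax, fracAvg, ENNReal.rpow_one, div_one]

lemma fracMax_le {B : ℝ≥0∞} (h : ∀ c s, 0 < s → z ∈ cube n c s → fracAvg n γ f c s ≤ B) :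
    fracMax n γ 1 f z ≤ B := by
  rw [fracMax_one_eq_iSup]
  exact iSup_le fun c => iSup_le fun s => iSup₂_le (h c s)

lemma le_fracMax {c : Fin n → ℝ} {s : ℝ} (hs : 0 < s) (hz : z ∈ cube n c s) :
    fracAvg n γ f c s ≤ fracMax n γ 1 f z := by
  rw [fracMax_one_eq_iSup]
  exact le_iSup₂_of_le c s (le_iSup₂_of_le hs hz le_rfl)

lemma fracAvg_mono (h : ∀ y, |f₁ y| ≤ |f y|) (c : Fin n → ℝ) (s : ℝ) :
    fracAvg n γ f₁ c s ≤ fracAvg n γ f c s := by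
  unfold fracAvg
  exact mul_le_mul_right (mul_le_mul_right (lintegral_mono fun y => ofReal_le_ofReal (h y)) _) _

lemma fracMax_mono (h : ∀ y, |f₁ y| ≤ |f y|) (z : Fin n → ℝ) :
    fracMax n γ 1 f₁ z ≤ fracMax n γ 1 f z :=
  fracMax_le fun c _ hs hz => (fracAvg_mono h c _).trans (le_fracMax hs hz)

lemma fracAvg_indicator {E : Set (Fin n → ℝ)} {c : Fin n → ℝ} {s : ℝ} (h : cube n c s ⊆ E) :
    fracAvg n γ (E.indicator f) c s = fracAvg n γ f c s := by
  unfold fracAvg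
  rw [setLIntegral_congr_fun (measurableSet_cube c s)
    fun y hy => by rw [indicator_of_mem (h hy)]]

lemma fracAvg_le_of_subset {Φ Ψ : ℝ → ℝ} (hΦ : IsYoung Φ)
    (hinv : ∀ t : ℝ, 0 < t → youngInv Ψ t = t ^ (-γ) * youngInv Φ t) (hγ : γ < 1)
    (hf : LocallyIntegrable f volume) {c x : Fin n → ℝ} {s T a : ℝ} (hs : 0 < s) (hT : 0 < T)
    (hsub : cube n c s ⊆ cube n x T) (hTs : T ≤ a * s) :
    fracAvg n γ f c s ≤ ENNReal.ofReal ((a ^ n) ^ (1 - γ)) *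
      (ENNReal.ofReal (youngInv Ψ (1 / (volume (cube n x T)).toReal)) *
        luxNorm n Φ (cube n x T) f) := by
  have hint := (lintegral_mono_set hsub).trans (lintegral_le_rpow_mul_luxNorm hΦ hinv
    (volume_cube_ne_zero x hT) (volume_cube_ne_top x T) (hf.integrableOn_isCompact
      (isCompact_cube x T)))
  rw [toReal_volume_cube x hT.le] at hint ⊢
  calc fracAvg n γ f c s
      ≤ volume (cube n c s) ^ γ * ((volume (cube n c s))⁻¹ *
          (ENNReal.ofReal ((T ^ n) ^ (1 - γ) * youngInv Ψ (1 / T ^ n)) *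
            luxNorm n Φ (cube n x T) f)) := by
        unfold fracAvg
        gcongr
    _ = ENNReal.ofReal ((s ^ n) ^ γ * (s ^ n)⁻¹ * (T ^ n) ^ (1 - γ)) *
          (ENNReal.ofReal (youngInv Ψ (1 / T ^ n)) * luxNorm n Φ (cube n x T) f) := by
        rw [volume_cube c hs.le, ofReal_rpow_of_pos (by positivity),
          ← ofReal_inv_of_pos (by positivity), ofReal_mul (by positivity),
          ofReal_mul (by positivity), ofReal_mul (by positivity)]
        ring
    _ ≤ _ := by
        gcongr
        exact rpow_mul_inv_mul_rpow_le (by positivity) (by positivity)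
          (by rw [← mul_pow]; exact pow_le_pow_left₀ hT.le hTs n) hγ

end FracMax

section LocalEstimate

variable {n : ℕ} {γ : ℝ} {Φ Ψ : ℝ → ℝ} {f : (Fin n → ℝ) → ℝ} {x : Fin n → ℝ} {l : ℝ}

lemma fracMax_le_sup_orliczTail (hΦ : IsYoung Φ)
    (hinv : ∀ t : ℝ, 0 < t → youngInv Ψ t = t ^ (-γ) * youngInv Φ t) (hγ : γ < 1)
    (hl : 0 < l) (hf : LocallyIntegrable f volume) {z : Fin n → ℝ} (hz : z ∈ cube n x l) :
    fracMax n γ 1 f z ≤ fracMax n γ 1 ((cube n x (3 * l)).indicator f) z ⊔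
      ENNReal.ofReal (((3 : ℝ) ^ n) ^ (1 - γ)) * orliczTail n Φ Ψ f x (3 * l) := by
  refine fracMax_le fun c s hs hzc => ?_
  have hsub := cube_subset_cube_of_mem hzc hz
  rcases le_or_gt s l with hsl | hls
  · rw [← fracAvg_indicator (hsub.trans (cube_mono (by linarith : 2 * s + l ≤ 3 * l)))]
    exact le_sup_of_le_left (le_fracMax hs hzc)
  · refine le_sup_of_le_right ((fracAvg_le_of_subset hΦ hinv hγ hf hs (by positivity) hsub
      (by linarith : 2 * s + l ≤ 3 * s)).trans ?_)
    gcongr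
    exact le_orliczTail (by linarith)

lemma luxNorm_fracMax_cube_le (hΦ : IsYoung Φ) (hΨ : IsYoung Ψ)
    (hinv : ∀ t : ℝ, 0 < t → youngInv Ψ t = t ^ (-γ) * youngInv Φ t) (hγ : γ < 1)
    {C : ℝ} (hC : 0 ≤ C) (hbdd : ∀ f : (Fin n → ℝ) → ℝ,
      luxNormGlobal n Ψ (fun x => (fracMax n γ 1 f x).toReal) ≤
        ENNReal.ofReal C * luxNormGlobal n Φ f)
    (hl : 0 < l) (hf : LocallyIntegrable f volume) :
    luxNorm n Ψ (cube n x l) (fun z => (fracMax n γ 1 f z).toReal) ≤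
      ENNReal.ofReal ((C * 3 ^ n + ((3 : ℝ) ^ n) ^ (1 - γ)) *
        (1 / youngInv Ψ (1 / (volume (cube n x l)).toReal))) * orliczTail n Φ Ψ f x (3 * l) := by
  set K : ℝ := ((3 : ℝ) ^ n) ^ (1 - γ)
  set S := orliczTail n Φ Ψ f x (3 * l)
  set ψ := youngInv Ψ (1 / (volume (cube n x l)).toReal)
  have hQ0 := volume_cube_ne_zero x hl
  have hψ : 0 < ψ := youngInv_pos hΨ (one_div_pos.2 (toReal_pos hQ0 (volume_cube_ne_top x l)))
  rcases eq_or_ne S ⊤ with hS | hS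
  · rw [hS, ENNReal.mul_top (ofReal_pos.2 (by positivity)).ne']
    exact le_top
  set f₁ := (cube n x (3 * l)).indicator f
  have hlocal : luxNorm n Ψ (cube n x l) (fun z => (fracMax n γ 1 f₁ z).toReal) ≤
      ENNReal.ofReal (C * 3 ^ n * (1 / ψ)) * S :=
    calc _ ≤ ENNReal.ofReal C * luxNormGlobal n Φ f₁ := (luxNorm_le_luxNormGlobal _).trans (hbdd f₁)
      _ ≤ ENNReal.ofReal C * (ENNReal.ofReal (3 ^ n * (1 / ψ)) * S) := by
        gcongr
        exact (luxNormGlobal_indicator_le hΦ.map_zero (measurableSet_cube _ _) f).trans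
          (luxNorm_cube_le_orliczTail hΨ (by norm_num) hl)
      _ = _ := by rw [← mul_assoc, ← ofReal_mul hC, mul_assoc]
  have hpt : ∀ z ∈ cube n x l, |(fracMax n γ 1 f z).toReal| ≤
      |(fracMax n γ 1 f₁ z).toReal| + K * S.toReal / ψ * ψ := by
    intro z hz
    rw [abs_of_nonneg toReal_nonneg, abs_of_nonneg toReal_nonneg, div_mul_cancel₀ _ hψ.ne']
    have h := toReal_le_toReal_add_of_le_sup
      (fracMax_mono (fun y => by by_cases hy : y ∈ cube n x (3 * l) <;> simp [hy]) z)
      (mul_ne_top ofReal_ne_top hS) (fracMax_le_sup_orliczTail hΦ hinv hγ hl hf hz)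
    rwa [toReal_mul, toReal_ofReal (by positivity)] at h
  calc _ ≤ luxNorm n Ψ (cube n x l) (fun z => (fracMax n γ 1 f₁ z).toReal) +
        ENNReal.ofReal (K * S.toReal / ψ) :=
      luxNorm_le_add_const hΨ (measurableSet_cube x l) hQ0 (volume_cube_ne_top x l)
        (by positivity) hpt
    _ ≤ ENNReal.ofReal (C * 3 ^ n * (1 / ψ)) * S + ENNReal.ofReal (K * (1 / ψ)) * S := by
      rw [mul_one_div K, mul_div_right_comm, ofReal_mul (by positivity), ofReal_toReal hS]
      gcongr
    _ = _ := by
      rw [← add_mul, ← ofReal_add (by positivity) (by positivity), ← add_mul]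

end LocalEstimate

theorem orlicz_local_estimate_fracMax_ii_general
    (n : ℕ) (γ : ℝ) (hγ1 : γ < 1)
    (Φ Ψ : ℝ → ℝ) (hΦ : IsYoung Φ) (hΨ : IsYoung Ψ)
    (hinv : ∀ t : ℝ, 0 < t → youngInv Ψ t = t ^ (-γ) * youngInv Φ t)
    (hbdd : ∃ C : ℝ, 0 < C ∧ ∀ f : (Fin n → ℝ) → ℝ,
      luxNormGlobal n Ψ (fun x => (fracMax n γ 1 f x).toReal) ≤
        ENNReal.ofReal C * luxNormGlobal n Φ f) :
    ∃ cn dn : ℝ, 0 < cn ∧ 0 < dn ∧ 1 ≤ cn * dn ∧ ∃ c : ℝ, 0 < c ∧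
      ∀ (x : Fin n → ℝ) (l : ℝ), 0 < l →
        ∀ f : (Fin n → ℝ) → ℝ, LocallyIntegrable f volume →
          luxNorm n Ψ (cube n x l) (fun z => (fracMax n γ 1 f z).toReal) ≤
            ENNReal.ofReal
                (c * (1 / youngInv Ψ (1 / (volume (cube n x l)).toReal))) *
              ⨆ (t : ℝ) (_ : cn * dn * l ≤ t),
                ENNReal.ofReal (youngInv Ψ (1 / (volume (cube n x t)).toReal)) *
                  luxNorm n Φ (cube n x t) f := by
  obtain ⟨C, hC, hbdd⟩ := hbdd
  refine ⟨3, 1, by norm_num, by norm_num, by norm_num, C * 3 ^ n + ((3 : ℝ) ^ n) ^ (1 - γ),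
    by positivity, fun x l hl f hf => ?_⟩
  rw [mul_one]
  exact luxNorm_fracMax_cube_le hΦ hΨ hinv hγ1 hC.le hbdd hl hf

/-- Proposition 5.1 (ii): `‖M_γ f‖_{L^Ψ_Q} ≤
c (1/Ψ⁻¹(1/|Q|)) sup_{t ≥ cₙdₙ l} Ψ⁻¹(1/|Q(x,t)|) ‖f‖_{L^Φ_{Q(x,t)}}`. -/
theorem orlicz_local_estimate_fracMax_ii
    (n : ℕ) (hn : 1 ≤ n) (γ : ℝ) (hγ0 : 0 ≤ γ) (hγ1 : γ < 1)
    (Φ Ψ : ℝ → ℝ) (hΦ : IsYoung Φ) (hΨ : IsYoung Ψ)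
    (hinv : ∀ t : ℝ, 0 < t → youngInv Ψ t = t ^ (-γ) * youngInv Φ t)
    (hbdd : ∃ C : ℝ, 0 < C ∧ ∀ f : (Fin n → ℝ) → ℝ,
      luxNormGlobal n Ψ (fun x => (fracMax n γ 1 f x).toReal) ≤
        ENNReal.ofReal C * luxNormGlobal n Φ f) :
    ∃ cn dn : ℝ, 0 < cn ∧ 0 < dn ∧ 1 ≤ cn * dn ∧ ∃ c : ℝ, 0 < c ∧
      ∀ (x : Fin n → ℝ) (l : ℝ), 0 < l →
        ∀ f : (Fin n → ℝ) → ℝ, LocallyIntegrable f volume →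
          luxNorm n Ψ (cube n x l) (fun z => (fracMax n γ 1 f z).toReal) ≤
            ENNReal.ofReal
                (c * (1 / youngInv Ψ (1 / (volume (cube n x l)).toReal))) *
              ⨆ (t : ℝ) (_ : cn * dn * l ≤ t),
                ENNReal.ofReal (youngInv Ψ (1 / (volume (cube n x t)).toReal)) *
                  luxNorm n Φ (cube n x t) f :=
  orlicz_local_estimate_fracMax_ii_general n γ hγ1 Φ Ψ hΦ hΨ hinv hbdd
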